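/- arXiv:2210.11627 — 3 statements merged into one kernel-verified Lean document; each statement's English description precedes it below -/
import Mathlib

section
/- For any alternative a ∈ X, the status quo rule f^a — which selects x if every agent's top is x, and selects a otherwise — is not obviously manipulable, even though every agent vetoes every alternative in X \ {a} via any preference with top a. -/
/-- A preference profile: each agent `i : Fin n` has a strict preference,
modeled as a linear order on the set of alternatives `X`. -/
abbrev Profile (n : ℕ) (X : Type*) := Fin n → LinearOrder X

/-- The top (best) alternative of a preference `L`. -/
noncomputable def top {X : Type*} [Fintype X] [Nonempty X] (L : LinearOrder X) : X :=
  @Finset.max' X L Finset.univ Finset.univ_nonempty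

/-- `x` is strictly preferred to `y` according to `L`. -/
def prefers {X : Type*} (L : LinearOrder X) (x y : X) : Prop := L.lt y x

/-- The option set left open by preference `L` of agent `i` at rule `f`. -/
def OptionSet {n : ℕ} {X : Type*} (f : Profile n X → X) (i : Fin n) (L : LinearOrder X) :
    Set X :=
  {x | ∃ P : Profile n X, P i = L ∧ f P = x}

/-- `Li'` is a profitable manipulation of `f` at (true preference) `Li` for agent `i`. -/
def IsManip {n : ℕ} {X : Type*} (f : Profile n X → X) (i : Fin n)
    (Li Li' : LinearOrder X) : Prop :=
  ∃ P : Profile n X, P i = Li ∧ prefers Li (f (Function.update P i Li')) (f P)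

/-- The worst element of `O(Li')` is strictly `Li`-preferred to the worst element of `O(Li)`.
For nonempty finite option sets this is equivalent to: some element of `O(Li)` is strictly
worse (w.r.t. `Li`) than every element of `O(Li')`. -/
def WorstImproves {n : ℕ} {X : Type*} (f : Profile n X → X) (i : Fin n)
    (Li Li' : LinearOrder X) : Prop :=
  ∃ w ∈ OptionSet f i Li, ∀ w' ∈ OptionSet f i Li', prefers Li w' w

/-- The best element of `O(Li')` is strictly `Li`-preferred to the best element of `O(Li)`.
For nonempty finite option sets this is equivalent to: some element of `O(Li')` is strictly
better (w.r.t. `Li`) than every element of `O(Li)`. -/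
def BestImproves {n : ℕ} {X : Type*} (f : Profile n X → X) (i : Fin n)
    (Li Li' : LinearOrder X) : Prop :=
  ∃ b' ∈ OptionSet f i Li', ∀ b ∈ OptionSet f i Li, prefers Li b' b

/-- `Li'` is an obvious manipulation of `f` at `Li` for agent `i`. -/
def IsObviousManip {n : ℕ} {X : Type*} (f : Profile n X → X) (i : Fin n)
    (Li Li' : LinearOrder X) : Prop :=
  IsManip f i Li Li' ∧ (WorstImproves f i Li Li' ∨ BestImproves f i Li Li')

/-- `f` is not obviously manipulable. -/
def NOM {n : ℕ} {X : Type*} (f : Profile n X → X) : Prop :=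
  ∀ (i : Fin n) (Li Li' : LinearOrder X), ¬ IsObviousManip f i Li Li'

/-- `f` is tops-only. -/
def TopsOnly {n : ℕ} {X : Type*} [Fintype X] [Nonempty X] (f : Profile n X → X) : Prop :=
  ∀ P P' : Profile n X, (∀ i, top (P i) = top (P' i)) → f P = f P'

/-- The set `V_i` of alternatives that agent `i` vetoes via some preference. -/
def VetoSet {n : ℕ} {X : Type*} (f : Profile n X → X) (i : Fin n) : Set X :=
  {x | ∃ L : LinearOrder X, x ∉ OptionSet f i L}

/-- The set `SV_i` of alternatives strongly vetoed by agent `i`: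
`x` is vetoed via `L` precisely when the top of `L` differs from `x`. -/
def StrongVetoSet {n : ℕ} {X : Type*} [Fintype X] [Nonempty X]
    (f : Profile n X → X) (i : Fin n) : Set X :=
  {x | ∀ L : LinearOrder X, x ∉ OptionSet f i L ↔ top L ≠ x}

/-- `f` is dictatorial: some agent's top alternative is always selected. -/
def Dictatorial {n : ℕ} {X : Type*} [Fintype X] [Nonempty X]
    (f : Profile n X → X) : Prop :=
  ∃ i : Fin n, ∀ P : Profile n X, f P = top (P i)

open scoped Classical

/-- The status quo rule at `a`: selects `x` if every agent's top is `x`, and `a` otherwise. -/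
noncomputable def statusQuo {n : ℕ} {X : Type*} [Fintype X] [Nonempty X]
    (a : X) (P : Profile n X) : X :=
  if h : ∃ x : X, ∀ i, top (P i) = x then h.choose else a

section Aux

variable {X : Type*} [Fintype X] [Nonempty X]

lemma le_top' (L : LinearOrder X) (y : X) : L.le y (top L) :=
  Finset.le_max' (α := X) _ _ (Finset.mem_univ y)

lemma top_eq_of_forall_le (L : LinearOrder X) (b : X) (h : ∀ y, L.le y b) : top L = b :=
  L.le_antisymm _ _ (Finset.max'_le (α := X) _ _ _ fun y _ => h y) (le_top' L b)

/-- A linear order on `X` whose top is `b`. -/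
noncomputable def ordTop (b : X) : LinearOrder X :=
  LinearOrder.lift'
    (fun x => if x = b then Fintype.card X else ((Fintype.equivFin X x : Fin _) : ℕ))
    (by
      intro x y hxy
      dsimp only at hxy
      by_cases hx : x = b <;> by_cases hy : y = b
      · exact hx.trans hy.symm
      · rw [if_pos hx, if_neg hy] at hxy
        exact absurd hxy.symm (Fin.is_lt (Fintype.equivFin X y)).ne
      · rw [if_neg hx, if_pos hy] at hxy
        exact absurd hxy (Fin.is_lt (Fintype.equivFin X x)).ne
      · rw [if_neg hx, if_neg hy] at hxy
        exact (Fintype.equivFin X).injective (Fin.ext hxy))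

lemma top_ordTop (b : X) : top (ordTop b) = b := by
  apply top_eq_of_forall_le
  intro y
  show (if y = b then Fintype.card X else ((Fintype.equivFin X y : Fin _) : ℕ)) ≤
    (if b = b then Fintype.card X else ((Fintype.equivFin X b : Fin _) : ℕ))
  rw [if_pos rfl]
  by_cases hy : y = b
  · rw [if_pos hy]
  · rw [if_neg hy]; exact (Fin.is_lt _).le

variable {n : ℕ}

lemma statusQuo_eq_top (a : X) (P : Profile n X) (i : Fin n)
    (h : ∃ x : X, ∀ j, top (P j) = x) : statusQuo a P = top (P i) := by
  rw [statusQuo, dif_pos h]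
  exact (h.choose_spec i).symm

lemma statusQuo_eq_a (a : X) (P : Profile n X)
    (h : ¬ ∃ x : X, ∀ j, top (P j) = x) : statusQuo a P = a := by
  rw [statusQuo, dif_neg h]

lemma optionSet_subset (a : X) (i : Fin n) (L : LinearOrder X) :
    ∀ x ∈ OptionSet (statusQuo a) i L, x = a ∨ x = top L := by
  rintro x ⟨P, hPi, rfl⟩
  by_cases h : ∃ y : X, ∀ j, top (P j) = y
  · right; rw [statusQuo_eq_top a P i h, hPi]
  · left; exact statusQuo_eq_a a P h

lemma top_mem_optionSet (a : X) (i : Fin n) (L : LinearOrder X) :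
    top L ∈ OptionSet (statusQuo a) i L := by
  refine ⟨fun _ => L, rfl, ?_⟩
  exact statusQuo_eq_top a _ i ⟨top L, fun _ => rfl⟩

lemma a_mem_optionSet (hn : 2 ≤ n) (a : X) (i : Fin n) (L : LinearOrder X) :
    a ∈ OptionSet (statusQuo a) i L := by
  by_cases hL : top L = a
  · have := top_mem_optionSet a i L
    rwa [hL] at this
  · obtain ⟨j, hj⟩ : ∃ j : Fin n, j ≠ i :=
      Fintype.exists_ne_of_one_lt_card (by simpa using (show 1 < n by omega)) i
    refine ⟨Function.update (fun _ => L) j (ordTop a), ?_, ?_⟩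
    · rw [Function.update_of_ne (Ne.symm hj)]
    · apply statusQuo_eq_a
      rintro ⟨y, hy⟩
      have h1 := hy i
      have h2 := hy j
      rw [Function.update_of_ne (Ne.symm hj)] at h1
      rw [Function.update_self, top_ordTop] at h2
      exact hL (h1.trans h2.symm)

end Aux

/-- The status quo rule is NOM, even though every agent vetoes every alternative
in `X \ {a}` via any preference with top `a`. -/
theorem statusQuo_NOM {n : ℕ} {X : Type*} [Fintype X] [Nonempty X]
    (hn : 2 ≤ n) (hX : 2 ≤ Fintype.card X) (a : X) :
    NOM (statusQuo (n := n) a) ∧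
      ∀ (i : Fin n) (x : X), x ≠ a → ∀ L : LinearOrder X, top L = a →
        x ∉ OptionSet (statusQuo a) i L := by
  constructor
  · rintro i Li Li' ⟨-, hOM⟩
    letI := Li
    rcases hOM with ⟨w, hw, hall⟩ | ⟨b', hb', hall⟩
    · have ha : Li.lt w a := hall a (a_mem_optionSet hn a i Li')
      rcases optionSet_subset a i Li w hw with rfl | rfl
      · exact lt_irrefl _ ha
      · exact absurd ha (not_lt_of_ge (le_top' Li a))
    · have hb : Li.lt (top Li) b' := hall (top Li) (top_mem_optionSet a i Li)
      exact absurd hb (not_lt_of_ge (le_top' Li b'))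
  · intro i x hx L hL hmem
    rcases optionSet_subset a i L x hmem with rfl | rfl
    · exact hx rfl
    · exact hx hL
end

section
/- A non-dictatorial generalized median voter scheme f^p on the universal domain over X = {a,...,b} is not obviously manipulable if and only if for every agent i, p_{N\{i}} ∈ {a, a+1} and p_{{i}} ∈ {b−1, b}. -/
/-- The ordered set of alternatives `X = {a, a+1, ..., b} ⊆ ℕ`. -/
abbrev Alt (a b : ℕ) : Type := {x : ℕ // x ∈ Finset.Icc a b}

/-- `p` is a monotonic family of fixed ballots: `p_N = a`, `p_∅ = b`, and
`S ⊆ T` implies `p_T ≤ p_S`. -/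
def MonotonicFamily {n a b : ℕ} (p : Finset (Fin n) → Alt a b) : Prop :=
  (p Finset.univ).val = a ∧ (p ∅).val = b ∧
    ∀ S T : Finset (Fin n), S ⊆ T → p T ≤ p S

/-- The generalized median voter scheme associated with the family `p`:
`f^p(P) = min_{S ⊆ N} max_{j ∈ S} {t(P_j), p_S}`. -/
noncomputable def gms {n a b : ℕ} [Nonempty (Alt a b)]
    (p : Finset (Fin n) → Alt a b) (P : Profile n (Alt a b)) : Alt a b :=
  Finset.univ.inf' ⟨∅, Finset.mem_univ _⟩ fun S : Finset (Fin n) =>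
    (insert (p S) (S.image fun j => top (P j))).max' (Finset.insert_nonempty _ _)

/-!
For every profile, `min (p (N ∖ {i})) (t i) ≤ f^p P ≤ max (p {i}) (t i)`, and when all agents
but `i` share the top `c`, every `c` between `p (N ∖ {i})` and `p {i}` is the outcome whatever
`i` reports. Since `t L` is attainable at `L`, the best element of an option set never improves.
If `p (N ∖ {i}) ≤ a + 1` and `p {i} ≥ b - 1`, an attainable outcome outside that interval is `a`
or `b` and then equals `t L`; so each outcome attainable at `L` is either `i`'s favourite or
attainable under every report, and the worst element cannot improve either. Conversely, if
`p (N ∖ {i}) ≥ a + 2` and `p {i} ≥ a + 1`, an agent ranking `a` first and `a + 1` last obtains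
`a + 1` against others voting `a + 1`, while reporting `p (N ∖ {i})` secures at least `a + 2`:
an obvious manipulation. The case `p {i} ≤ b - 2`, `p (N ∖ {i}) ≤ b - 1` is dual, and in the
remaining case `p (N ∖ {i}) = b`, `p {i} = a` agent `i` is a dictator.
-/

open Finset Function

section Preferences

variable {X : Type*} {n : ℕ} {f : Profile n X → X} {i : Fin n} {L L' : LinearOrder X}

lemma prefers_irrefl (L : LinearOrder X) (x : X) : ¬ prefers L x x :=
  @lt_irrefl X L.toPreorder x

lemma WorstImproves.isObviousManip (h : WorstImproves f i L L') :
    IsObviousManip f i L L' := by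
  obtain ⟨_, ⟨P, hPi, rfl⟩, hbetter⟩ := h
  exact ⟨⟨P, hPi, hbetter _ ⟨_, update_self .., rfl⟩⟩, Or.inl ⟨_, ⟨P, hPi, rfl⟩, hbetter⟩⟩

lemma isObviousManip_of_bot_mem {w : X} (hbot : ∀ x ≠ w, prefers L x w)
    (hw : w ∈ OptionSet f i L) (hw' : w ∉ OptionSet f i L') : IsObviousManip f i L L' :=
  WorstImproves.isObviousManip ⟨w, hw, fun _ h' => hbot _ (ne_of_mem_of_not_mem h' hw')⟩

variable [Fintype X] [Nonempty X]

lemma not_prefers_top (L : LinearOrder X) (x : X) : ¬ prefers L x (top L) :=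
  letI := L
  not_lt_of_ge (le_max' _ x (mem_univ x))

lemma top_eq_of_prefers {t : X} (h : ∀ x ≠ t, prefers L t x) : top L = t :=
  by_contra fun hne => not_prefers_top L t (h _ hne)

lemma not_bestImproves (h : top L ∈ OptionSet f i L) : ¬ BestImproves f i L L' :=
  fun ⟨b', _, hb'⟩ => not_prefers_top L b' (hb' _ h)

lemma not_worstImproves (h : ∀ w ∈ OptionSet f i L, w = top L ∨ w ∈ OptionSet f i L') :
    ¬ WorstImproves f i L L' := by
  rintro ⟨w, hw, hbetter⟩
  rcases h w hw with rfl | hw'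
  · exact not_prefers_top L _ (hbetter _ ⟨fun _ => L', rfl, rfl⟩)
  · exact prefers_irrefl L w (hbetter w hw')

end Preferences

section PrefTopBot

variable {X : Type*} [LinearOrder X]

/-- `t` first, `w` last, the other alternatives in their given order. -/
@[reducible]
def prefTopBot (t w : X) : LinearOrder X :=
  LinearOrder.lift' (fun x => toLex ((if x = t then 2 else if x = w then 0 else 1 : ℕ), x))
    fun _ _ h => (Prod.ext_iff.1 (toLex.injective h)).2

lemma prefers_prefTopBot_iff {t w x y : X} : prefers (prefTopBot t w) x y ↔
    toLex ((if y = t then 2 else if y = w then 0 else 1 : ℕ), y) <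
      toLex ((if x = t then 2 else if x = w then 0 else 1 : ℕ), x) :=
  Iff.rfl

lemma top_prefTopBot [Fintype X] [Nonempty X] (t w : X) : top (prefTopBot t w) = t := by
  refine top_eq_of_prefers fun x hx => prefers_prefTopBot_iff.2 (Prod.Lex.toLex_lt_toLex.2 ?_)
  left
  simp only [if_neg hx]
  split_ifs <;> decide

lemma prefers_prefTopBot_bot {t w x : X} (hwt : w ≠ t) (hx : x ≠ w) :
    prefers (prefTopBot t w) x w := by
  refine prefers_prefTopBot_iff.2 (Prod.Lex.toLex_lt_toLex.2 (Or.inl ?_))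
  simp only [if_neg hwt, if_neg hx]
  split_ifs <;> decide

end PrefTopBot

namespace Alt

variable {a b : ℕ}

lemma left_le (x : Alt a b) : a ≤ x.val := (mem_Icc.1 x.2).1

lemma le_right (x : Alt a b) : x.val ≤ b := (mem_Icc.1 x.2).2

end Alt

section GMS

variable {n a b : ℕ} {p : Finset (Fin n) → Alt a b}

lemma MonotonicFamily.univ_le (hp : MonotonicFamily p) (c : Alt a b) : p univ ≤ c :=
  Subtype.coe_le_coe.1 (hp.1.symm ▸ c.left_le)

lemma MonotonicFamily.le_empty (hp : MonotonicFamily p) (c : Alt a b) : c ≤ p ∅ :=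
  Subtype.coe_le_coe.1 (hp.2.1.symm ▸ c.le_right)

variable [Nonempty (Alt a b)] {P : Profile n (Alt a b)} {c : Alt a b}

lemma gms_le_iff : gms p P ≤ c ↔ ∃ S, p S ≤ c ∧ ∀ j ∈ S, top (P j) ≤ c :=
  (inf'_le_iff _).trans <| by
    simp only [max'_le_iff, forall_mem_insert, forall_mem_image, mem_univ, true_and]

lemma le_gms_iff : c ≤ gms p P ↔ ∀ S, c ≤ p S ∨ ∃ j ∈ S, c ≤ top (P j) :=
  (le_inf'_iff _ _).trans <| by
    simp only [max'_eq_sup', le_sup'_iff, exists_mem_insert, exists_mem_image, mem_univ,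
      forall_const, id]

lemma gms_le_of_forall_top_le (hc : p univ ≤ c) (h : ∀ j, top (P j) ≤ c) : gms p P ≤ c :=
  gms_le_iff.2 ⟨univ, hc, fun j _ => h j⟩

lemma le_gms_of_forall_le_top (hc : c ≤ p ∅) (h : ∀ j, c ≤ top (P j)) : c ≤ gms p P :=
  le_gms_iff.2 fun S => S.eq_empty_or_nonempty.elim (fun hS => Or.inl (hS ▸ hc))
    fun ⟨j, hj⟩ => Or.inr ⟨j, hj, h j⟩

lemma gms_eq_of_forall_top_eq (hp : MonotonicFamily p) (h : ∀ j, top (P j) = c) :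
    gms p P = c :=
  le_antisymm (gms_le_of_forall_top_le (hp.univ_le c) fun j => (h j).le)
    (le_gms_of_forall_le_top (hp.le_empty c) fun j => (h j).ge)

lemma gms_le_max_singleton (i : Fin n) : gms p P ≤ max (p {i}) (top (P i)) :=
  gms_le_iff.2 ⟨{i}, le_max_left _ _, by simp⟩

lemma min_erase_le_gms (hmono : ∀ S T, S ⊆ T → p T ≤ p S) (i : Fin n) :
    min (p (univ.erase i)) (top (P i)) ≤ gms p P := by
  refine le_gms_iff.2 fun S => ?_
  by_cases hi : i ∈ S
  · exact Or.inr ⟨i, hi, min_le_right _ _⟩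
  · refine Or.inl ((min_le_left _ _).trans (hmono _ _ fun j hj => ?_))
    exact mem_erase.2 ⟨ne_of_mem_of_not_mem hj hi, mem_univ j⟩

section OthersTop

variable {i : Fin n} (h : ∀ j ≠ i, top (P j) = c)
include h

lemma gms_le_max_erase : gms p P ≤ max c (p (univ.erase i)) :=
  gms_le_iff.2 ⟨univ.erase i, le_max_right _ _,
    fun j hj => (h j (ne_of_mem_erase hj)).le.trans (le_max_left _ _)⟩

lemma min_singleton_le_gms (hmono : ∀ S T, S ⊆ T → p T ≤ p S) :
    min c (p {i}) ≤ gms p P := by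
  refine le_gms_iff.2 fun S => ?_
  by_cases hS : S ⊆ {i}
  · exact Or.inl ((min_le_right _ _).trans (hmono _ _ hS))
  · obtain ⟨j, hj, hji⟩ := not_subset.1 hS
    exact Or.inr ⟨j, hj, (min_le_left _ _).trans (h j (by simpa using hji)).ge⟩

lemma gms_eq_of_mem_Icc (hmono : ∀ S T, S ⊆ T → p T ≤ p S) (hq : p (univ.erase i) ≤ c)
    (hr : c ≤ p {i}) : gms p P = c :=
  le_antisymm ((gms_le_max_erase h).trans (max_le le_rfl hq))
    ((le_min le_rfl hr).trans (min_singleton_le_gms h hmono))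

lemma gms_eq_of_top_le (hp : MonotonicFamily p) (ht : top (P i) ≤ c) (hr : c ≤ p {i}) :
    gms p P = c :=
  le_antisymm (gms_le_of_forall_top_le (hp.univ_le c) fun j => by
      by_cases hj : j = i
      · exact hj ▸ ht
      · exact (h j hj).le)
    ((le_min le_rfl hr).trans (min_singleton_le_gms h hp.2.2))

lemma gms_eq_of_le_top (hp : MonotonicFamily p) (ht : c ≤ top (P i))
    (hq : p (univ.erase i) ≤ c) : gms p P = c :=
  le_antisymm ((gms_le_max_erase h).trans (max_le le_rfl hq))
    (le_gms_of_forall_le_top (hp.le_empty c) fun j => by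
      by_cases hj : j = i
      · exact hj ▸ ht
      · exact (h j hj).ge)

end OthersTop

lemma top_mem_optionSet_gms (hp : MonotonicFamily p) (i : Fin n) (L : LinearOrder (Alt a b)) :
    top L ∈ OptionSet (gms p) i L :=
  ⟨fun _ => L, rfl, gms_eq_of_forall_top_eq hp fun _ => rfl⟩

lemma mem_optionSet_gms (hmono : ∀ S T, S ⊆ T → p T ≤ p S) {i : Fin n}
    (hq : p (univ.erase i) ≤ c) (hr : c ≤ p {i}) (L : LinearOrder (Alt a b)) :
    c ∈ OptionSet (gms p) i L :=
  ⟨update (fun _ => prefTopBot c c) i L, update_self .., gms_eq_of_mem_Icc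
    (fun j hj => by rw [update_of_ne hj, top_prefTopBot]) hmono hq hr⟩

end GMS

section Characterization

variable {n a b : ℕ} {p : Finset (Fin n) → Alt a b} [Nonempty (Alt a b)]

lemma not_nom_gms_of_le_erase (hp : MonotonicFamily p) (i : Fin n)
    (hq : a + 2 ≤ (p (univ.erase i)).val) (hr : a + 1 ≤ (p {i}).val) : ¬ NOM (gms p) := by
  have hb := (p (univ.erase i)).le_right
  let xa : Alt a b := ⟨a, mem_Icc.2 ⟨le_rfl, by omega⟩⟩
  let xa1 : Alt a b := ⟨a + 1, mem_Icc.2 ⟨by omega, by omega⟩⟩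
  have hne : xa1 ≠ xa := fun h => by simpa [xa, xa1] using congrArg Subtype.val h
  have htruth : xa1 ∈ OptionSet (gms p) i (prefTopBot xa xa1) :=
    ⟨update (fun _ => prefTopBot xa1 xa1) i (prefTopBot xa xa1), update_self ..,
      gms_eq_of_top_le (fun j hj => by rw [update_of_ne hj, top_prefTopBot]) hp
      (by rw [update_self, top_prefTopBot]; exact Subtype.coe_le_coe.1 (by simp [xa, xa1]))
      (Subtype.coe_le_coe.1 hr)⟩
  have hreport :
      xa1 ∉ OptionSet (gms p) i (prefTopBot (p (univ.erase i)) (p (univ.erase i))) := by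
    rintro ⟨Q, hQ, hQxa1⟩
    have hlow := min_erase_le_gms hp.2.2 i (P := Q)
    rw [hQ, top_prefTopBot, min_self, hQxa1, ← Subtype.coe_le_coe] at hlow
    simp only [xa1] at hlow
    omega
  exact fun hnom => hnom i _ _
    (isObviousManip_of_bot_mem (fun _ hx => prefers_prefTopBot_bot hne hx) htruth hreport)

lemma not_nom_gms_of_singleton_le (hp : MonotonicFamily p) (i : Fin n)
    (hq : (p (univ.erase i)).val + 1 ≤ b) (hr : (p {i}).val + 2 ≤ b) : ¬ NOM (gms p) := by
  have ha := (p {i}).left_le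
  let xb : Alt a b := ⟨b, mem_Icc.2 ⟨by omega, le_rfl⟩⟩
  let xb1 : Alt a b := ⟨b - 1, mem_Icc.2 ⟨by omega, by omega⟩⟩
  have hne : xb1 ≠ xb := fun h => by
    have := congrArg Subtype.val h
    simp only [xb, xb1] at this
    omega
  have htruth : xb1 ∈ OptionSet (gms p) i (prefTopBot xb xb1) :=
    ⟨update (fun _ => prefTopBot xb1 xb1) i (prefTopBot xb xb1), update_self ..,
      gms_eq_of_le_top (fun j hj => by rw [update_of_ne hj, top_prefTopBot]) hp
      (by rw [update_self, top_prefTopBot]; exact Subtype.coe_le_coe.1 (by simp [xb, xb1]))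
      (Subtype.coe_le_coe.1 (by simp only [xb1]; omega))⟩
  have hreport : xb1 ∉ OptionSet (gms p) i (prefTopBot (p {i}) (p {i})) := by
    rintro ⟨Q, hQ, hQxb1⟩
    have hhigh := gms_le_max_singleton i (p := p) (P := Q)
    rw [hQ, top_prefTopBot, max_self, hQxb1, ← Subtype.coe_le_coe] at hhigh
    simp only [xb1] at hhigh
    omega
  exact fun hnom => hnom i _ _
    (isObviousManip_of_bot_mem (fun _ hx => prefers_prefTopBot_bot hne hx) htruth hreport)

lemma dictatorial_gms (hmono : ∀ S T, S ⊆ T → p T ≤ p S) (i : Fin n)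
    (hq : (p (univ.erase i)).val = b) (hr : (p {i}).val = a) : Dictatorial (gms p) :=
  ⟨i, fun P => le_antisymm
    ((gms_le_max_singleton i).trans
      (max_le (by rw [← Subtype.coe_le_coe, hr]; exact Alt.left_le _) le_rfl))
    ((le_min (by rw [← Subtype.coe_le_coe, hq]; exact Alt.le_right _) le_rfl).trans
      (min_erase_le_gms hmono i))⟩

lemma gms_eq_top_or_mem_Icc (hmono : ∀ S T, S ⊆ T → p T ≤ p S) {i : Fin n}
    (hq : (p (univ.erase i)).val ≤ a + 1) (hr : b - 1 ≤ (p {i}).val) (P : Profile n (Alt a b)) :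
    gms p P = top (P i) ∨ p (univ.erase i) ≤ gms p P ∧ gms p P ≤ p {i} := by
  have hlow := min_erase_le_gms hmono i (P := P)
  have hhigh := gms_le_max_singleton i (p := p) (P := P)
  rw [min_le_iff] at hlow
  rw [le_max_iff] at hhigh
  simp only [Subtype.ext_iff, ← Subtype.coe_le_coe] at hlow hhigh ⊢
  have := (gms p P).left_le
  have := (gms p P).le_right
  have := (top (P i)).left_le
  have := (top (P i)).le_right
  omega

lemma nom_gms (hp : MonotonicFamily p) (hq : ∀ i, (p (univ.erase i)).val ≤ a + 1)
    (hr : ∀ i, b - 1 ≤ (p {i}).val) : NOM (gms p) := by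
  rintro i L L' ⟨-, hworst | hbest⟩
  · refine not_worstImproves (fun w ⟨P, hPi, hw⟩ => ?_) hworst
    subst hPi hw
    exact (gms_eq_top_or_mem_Icc hp.2.2 (hq i) (hr i) P).imp_right
      fun h => mem_optionSet_gms hp.2.2 h.1 h.2 L'
  · exact not_bestImproves (top_mem_optionSet_gms hp i L) hbest

end Characterization

theorem gms_NOM_general {n a b : ℕ} [Nonempty (Alt a b)]
    (p : Finset (Fin n) → Alt a b) (hp : MonotonicFamily p)
    (hnd : ¬ Dictatorial (gms p)) :
    NOM (gms p) ↔ ∀ i : Fin n,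
      ((p (Finset.univ.erase i)).val = a ∨ (p (Finset.univ.erase i)).val = a + 1) ∧
      ((p {i}).val = b - 1 ∨ (p {i}).val = b) := by
  refine ⟨fun hnom i => ?_, fun h => nom_gms hp
    (fun i => by have := h i; omega) (fun i => by have := h i; omega)⟩
  have hA : ¬ (a + 2 ≤ (p (univ.erase i)).val ∧ a + 1 ≤ (p {i}).val) :=
    fun h => not_nom_gms_of_le_erase hp i h.1 h.2 hnom
  have hB : ¬ ((p (univ.erase i)).val + 1 ≤ b ∧ (p {i}).val + 2 ≤ b) :=
    fun h => not_nom_gms_of_singleton_le hp i h.1 h.2 hnom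
  have hD : ¬ ((p (univ.erase i)).val = b ∧ (p {i}).val = a) :=
    fun h => hnd (dictatorial_gms hp.2.2 i h.1 h.2)
  have := (p (univ.erase i)).left_le
  have := (p (univ.erase i)).le_right
  have := (p {i}).left_le
  have := (p {i}).le_right
  omega

/-- A non-dictatorial generalized median voter scheme is NOM iff for every agent `i`,
`p_{N\{i}} ∈ {a, a+1}` and `p_{{i}} ∈ {b-1, b}`. -/
theorem gms_NOM {n a b : ℕ} [Nonempty (Alt a b)]
    (hn : 2 ≤ n) (hab : a < b)
    (p : Finset (Fin n) → Alt a b) (hp : MonotonicFamily p)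
    (hnd : ¬ Dictatorial (gms p)) :
    NOM (gms p) ↔ ∀ i : Fin n,
      ((p (Finset.univ.erase i)).val = a ∨ (p (Finset.univ.erase i)).val = a + 1) ∧
      ((p {i}).val = b - 1 ∨ (p {i}).val = b) :=
  gms_NOM_general p hp hnd
end

section
/- Let f^W be a voting by committees and S ∈ 2^K a set such that (i) for each k ∈ S, agent i is not in the intersection of all coalitions in W_k, and (ii) for each k ∉ S, {i} ∉ W_k. Then S ∈ O^W(P_i) for every preference P_i. -/
open scoped Classical

/-- `Wk` is a committee: a nonempty, monotone family of nonempty coalitions of agents. -/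
def Committee {n : ℕ} (Wk : Set (Finset (Fin n))) : Prop :=
  Wk.Nonempty ∧ (∀ M ∈ Wk, M.Nonempty) ∧
    ∀ M ∈ Wk, ∀ M' : Finset (Fin n), M ⊆ M' → M' ∈ Wk

/-- Voting by committees: object `k` is chosen iff the set of agents whose top contains
`k` is a winning coalition in `W k`. Alternatives are subsets of the set `K` of objects. -/
noncomputable def vbc {n : ℕ} {K : Type*} [Fintype K] [DecidableEq K]
    (W : K → Set (Finset (Fin n))) (P : Profile n (Finset K)) : Finset K :=
  Finset.univ.filter fun k =>
    (Finset.univ.filter fun i : Fin n => k ∈ top (P i)) ∈ W k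

/-- The order `L` with `T` moved to the very top. -/
noncomputable abbrev topOrder {X : Type*} (L : LinearOrder X) (T : X) : LinearOrder X :=
  let _ := L
  LinearOrder.lift' (fun x => toLex (decide (x = T), x) : X → Bool ×ₗ X)
    fun _ _ h => congrArg (fun p => (ofLex p).2) h

lemma le_topOrder {X : Type*} (L : LinearOrder X) (T x : X) : (topOrder L T).le x T := by
  let _ := L
  change toLex (decide (x = T), x) ≤ toLex (decide (T = T), T)
  rcases eq_or_ne x T with rfl | hx
  · exact le_rfl
  · exact Prod.Lex.le_iff.mpr (Or.inl (by simp [hx]))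

lemma top_topOrder {X : Type*} [Fintype X] [Nonempty X] (L : LinearOrder X) (T : X) :
    top (topOrder L T) = T :=
  let _ := topOrder L T
  le_antisymm (Finset.max'_le _ _ _ fun x _ => le_topOrder L T x)
    (Finset.le_max' _ _ (Finset.mem_univ T))

lemma exists_profile_update_tops {n : ℕ} {X : Type*} [Fintype X] [Nonempty X]
    (i : Fin n) (L : LinearOrder X) (T : Fin n → X) :
    ∃ P : Profile n X, P i = L ∧ ∀ j ≠ i, top (P j) = T j :=
  ⟨Function.update (fun j => topOrder L (T j)) i L, Function.update_self .., fun j hj => by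
    rw [Function.update_of_ne hj, top_topOrder]⟩

namespace Committee

variable {n : ℕ} {Wk : Set (Finset (Fin n))}

lemma mem_of_subset (hW : Committee Wk) {M M' : Finset (Fin n)} (hM : M ∈ Wk) (h : M ⊆ M') :
    M' ∈ Wk :=
  hW.2.2 M hM M' h

lemma notMem_of_subset_singleton (hW : Committee Wk) {i : Fin n} (hi : {i} ∉ Wk)
    {M : Finset (Fin n)} (h : M ⊆ {i}) : M ∉ Wk := by
  rcases Finset.subset_singleton_iff.mp h with rfl | rfl
  · exact fun hM => Finset.not_nonempty_empty (hW.2.1 ∅ hM)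
  · exact hi

end Committee

section vbc

variable {n : ℕ} {K : Type*} [Fintype K] [DecidableEq K] {W : K → Set (Finset (Fin n))}

lemma mem_vbc {P : Profile n (Finset K)} {k : K} :
    k ∈ vbc W P ↔ (Finset.univ.filter fun j => k ∈ top (P j)) ∈ W k := by
  simp [vbc]

lemma vbc_eq_of_tops (hW : ∀ k, Committee (W k)) {i : Fin n} {S : Finset K}
    {M : K → Finset (Fin n)} (hM : ∀ k ∈ S, M k ∈ W k) (hMi : ∀ k ∈ S, i ∉ M k)
    (hS : ∀ k ∉ S, ({i} : Finset (Fin n)) ∉ W k) {P : Profile n (Finset K)}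
    (hP : ∀ j ≠ i, top (P j) = S.filter (j ∈ M ·)) :
    vbc W P = S := by
  ext k
  rw [mem_vbc]
  by_cases hk : k ∈ S
  · refine iff_of_true ((hW k).mem_of_subset (hM k hk) fun j hj => ?_) hk
    have hji : j ≠ i := by rintro rfl; exact hMi k hk hj
    simp [hP j hji, hk, hj]
  · refine iff_of_false ((hW k).notMem_of_subset_singleton (hS k hk) fun j hj => ?_) hk
    refine Finset.mem_singleton.mpr (by_contra fun hji => hk ?_)
    have hkj : k ∈ S.filter (j ∈ M ·) := by simpa [hP j hji] using hj
    exact (Finset.mem_filter.mp hkj).1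

end vbc

theorem vbc_mem_optionSet_general {n : ℕ} {K : Type*} [Fintype K] [DecidableEq K]
    (W : K → Set (Finset (Fin n))) (hW : ∀ k, Committee (W k))
    (i : Fin n) (S : Finset K)
    (h1 : ∀ k ∈ S, ∃ M ∈ W k, i ∉ M)
    (h2 : ∀ k ∉ S, ({i} : Finset (Fin n)) ∉ W k) :
    ∀ L : LinearOrder (Finset K), S ∈ OptionSet (vbc W) i L := by
  intro L
  choose! M hM hMi using h1
  obtain ⟨P, hPi, hP⟩ := exists_profile_update_tops i L fun j => S.filter (j ∈ M ·)
  exact ⟨P, hPi, vbc_eq_of_tops hW hM hMi h2 hP⟩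

/-- If (i) for each `k ∈ S` agent `i` is not in the intersection of all coalitions of
`W k`, and (ii) for each `k ∉ S`, `{i} ∉ W k`, then `S` belongs to the option set of
every preference of agent `i`. -/
theorem vbc_mem_optionSet {n : ℕ} {K : Type*} [Fintype K] [DecidableEq K]
    (hn : 2 ≤ n) (hK : 2 ≤ Fintype.card K)
    (W : K → Set (Finset (Fin n))) (hW : ∀ k, Committee (W k))
    (i : Fin n) (S : Finset K)
    (h1 : ∀ k ∈ S, ∃ M ∈ W k, i ∉ M)
    (h2 : ∀ k ∉ S, ({i} : Finset (Fin n)) ∉ W k) :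
    ∀ L : LinearOrder (Finset K), S ∈ OptionSet (vbc W) i L :=
  vbc_mem_optionSet_general W hW i S h1 h2
end
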